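/- Let d be an odd prime, k ≠ k' two Wootters–Fields labels, and ρ = |Φ⁺⟩⟨Φ⁺| the maximally entangled pure state on ℂ^d⊗ℂ^d. Then the two-MUB fidelity lower bound F̃(ρ,Φ⁺) is tight: the coincidence probabilities satisfy ⟨m̂_k n̂_k*|Φ⁺⟩⟨Φ⁺|m̂_k n̂_k*⟩ = δ_{mn}/d for both bases, and consequently F̃(ρ,Φ⁺) = (1/d)·1 + 1 − 1/d − 0 = 1 = ⟨Φ⁺|ρ|Φ⁺⟩. -/

import Mathlib

/-!
The Wootters–Fields vectors are `|m̂_k⟩_j = ζ^(m j + k j²)/√d` with `ζ = exp(2πi/d)`. In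
`Σ_j ⟨j|m̂_k⟩⟨n̂_k|j⟩` the `k j²` phases cancel, leaving `1/d` times a geometric sum of the root
of unity `ζ^(m-n)`, i.e. `δ_{mn}`. Since `⟨Φ⁺|v⟩ = (1/√d) Σ_j v(j,j)`, this gives
`⟨Φ⁺|m̂_k n̂_k*⟩ = δ_{mn}/√d`, and a coincidence probability in the pure state `Φ⁺` is the squared
modulus of that overlap. Each term of the correction sum contains an off-diagonal coincidence,
so `F̃` reduces to `1/d + 1 - 1/d = 1`.
-/

open Matrix
open scoped ComplexOrder

/-- Component `j` of the Wootters–Fields basis vector `|m̂_k⟩`. -/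
noncomputable def wfComp (d : ℕ) (k m j : Fin d) : ℂ :=
  ((1 / Real.sqrt d : ℝ) : ℂ) *
    Complex.exp (2 * Real.pi * Complex.I *
      (((m.val * j.val + k.val * j.val ^ 2 : ℕ) : ℂ)) / d)

/-- The product vector `|m̂_k n̂_k*⟩ = |m̂_k⟩ ⊗ |n̂_k*⟩` on `ℂ^d ⊗ ℂ^d`. -/
noncomputable def wfPair (d : ℕ) (k m n : Fin d) : Fin d × Fin d → ℂ :=
  fun p => wfComp d k m p.1 * (starRingEnd ℂ) (wfComp d k n p.2)

/-- `γ̃_{mnm'n'} = 1/d` if `(m−m'−n+n') ≡ 0 (mod d)` and `0` otherwise. -/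
noncomputable def gammaCoef (d : ℕ) (m n m' n' : Fin d) : ℝ :=
  if ((m.val : ℤ) - (m'.val : ℤ) - (n.val : ℤ) + (n'.val : ℤ)) % (d : ℤ) = 0
  then 1 / d else 0

open Finset ComplexConjugate Complex

theorem star_dotProduct_vecMulVec_star_mulVec {ι : Type*} [Fintype ι] (a v : ι → ℂ) :
    star v ⬝ᵥ vecMulVec a (star a) *ᵥ v = normSq (star a ⬝ᵥ v) := by
  rw [vecMulVec_mulVec, op_smul_eq_smul, dotProduct_smul, smul_eq_mul, star_dotProduct v,
    normSq_eq_conj_mul_self, mul_comm]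
  rfl

theorem IsPrimitiveRoot.geom_sum_zpow_sub {K : Type*} [Field K] {ζ : K} {d : ℕ}
    (hζ : IsPrimitiveRoot ζ d) (m n : Fin d) :
    ∑ j ∈ range d, (ζ ^ ((m : ℤ) - n)) ^ j = if m = n then (d : K) else 0 := by
  split_ifs with h
  · simp [h]
  have hne : ζ ^ ((m : ℤ) - n) ≠ 1 := by
    rw [Ne, hζ.zpow_eq_one_iff_dvd]
    intro hdvd
    have := Int.eq_zero_of_abs_lt_dvd hdvd (by rw [abs_lt]; omega)
    exact h (Fin.ext (by omega))
  have hpow : (ζ ^ ((m : ℤ) - n)) ^ d = 1 := by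
    rw [← zpow_natCast, ← _root_.zpow_mul, hζ.zpow_eq_one_iff_dvd]
    exact dvd_mul_left _ _
  rw [geom_sum_eq hne, hpow, sub_self, zero_div]

theorem Complex.conj_exp_two_pi_I_div (d : ℕ) :
    conj (exp (2 * Real.pi * I / d)) = (exp (2 * Real.pi * I / d))⁻¹ := by
  rw [← exp_conj, ← exp_neg]
  congr 1
  simp only [map_div₀, map_mul, conj_ofReal, conj_I, conj_natCast, map_ofNat]
  ring

theorem one_div_sqrt_natCast_mul_self (d : ℕ) : 1 / Real.sqrt d * (1 / Real.sqrt d) = 1 / d := by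
  rw [div_mul_div_comm, one_mul, Real.mul_self_sqrt (Nat.cast_nonneg d)]

theorem ofReal_one_div_sqrt_natCast_mul_self (d : ℕ) :
    ((1 / Real.sqrt d : ℝ) : ℂ) * ((1 / Real.sqrt d : ℝ) : ℂ) = 1 / d := by
  rw [← ofReal_mul, one_div_sqrt_natCast_mul_self]
  push_cast
  rfl

theorem wfComp_eq_pow (d : ℕ) (k m j : Fin d) :
    wfComp d k m j = ((1 / Real.sqrt d : ℝ) : ℂ) *
      exp (2 * Real.pi * I / d) ^ (m.val * j.val + k.val * j.val ^ 2) := by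
  rw [wfComp, ← exp_nat_mul]
  congr 2
  ring

theorem wfComp_mul_conj_wfComp (d : ℕ) (k m n j : Fin d) :
    wfComp d k m j * conj (wfComp d k n j)
      = 1 / d * (exp (2 * Real.pi * I / d) ^ ((m : ℤ) - n)) ^ (j : ℕ) := by
  have hζ : exp (2 * Real.pi * I / d) ≠ 0 := exp_ne_zero _
  have hexp : (exp (2 * Real.pi * I / d) ^ ((m : ℤ) - n)) ^ (j : ℕ)
      = exp (2 * Real.pi * I / d) ^ (m.val * j.val + k.val * j.val ^ 2)
        / exp (2 * Real.pi * I / d) ^ (n.val * j.val + k.val * j.val ^ 2) := by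
    rw [← zpow_natCast, ← _root_.zpow_mul, ← zpow_natCast, ← zpow_natCast, ← zpow_sub₀ hζ]
    congr 1
    push_cast
    ring
  rw [wfComp_eq_pow, wfComp_eq_pow, map_mul, map_pow, conj_ofReal, conj_exp_two_pi_I_div,
    inv_pow, hexp, ← ofReal_one_div_sqrt_natCast_mul_self]
  ring

theorem wfComp_orthonormal {d : ℕ} (hd : 0 < d) (k m n : Fin d) :
    ∑ j, wfComp d k m j * conj (wfComp d k n j) = if m = n then 1 else 0 := by
  simp_rw [wfComp_mul_conj_wfComp]
  rw [← mul_sum, Fin.sum_univ_eq_sum_range (fun j => (_ : ℂ) ^ j),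
    (isPrimitiveRoot_exp d hd.ne').geom_sum_zpow_sub, mul_ite, mul_zero,
    one_div_mul_cancel (by exact_mod_cast hd.ne')]

noncomputable def phiPlus (d : ℕ) : Fin d × Fin d → ℂ :=
  fun p => if p.1 = p.2 then ((1 / Real.sqrt d : ℝ) : ℂ) else 0

theorem star_phiPlus_dotProduct (d : ℕ) (v : Fin d × Fin d → ℂ) :
    star (phiPlus d) ⬝ᵥ v = ((1 / Real.sqrt d : ℝ) : ℂ) * ∑ j, v (j, j) := by
  simp [dotProduct, phiPlus, Fintype.sum_prod_type, mul_sum, apply_ite]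

theorem star_phiPlus_dotProduct_wfPair {d : ℕ} (hd : 0 < d) (k m n : Fin d) :
    star (phiPlus d) ⬝ᵥ wfPair d k m n = if m = n then ((1 / Real.sqrt d : ℝ) : ℂ) else 0 := by
  rw [star_phiPlus_dotProduct]
  simp only [wfPair]
  rw [wfComp_orthonormal hd, mul_ite, mul_one, mul_zero]

theorem star_phiPlus_dotProduct_self {d : ℕ} (hd : 0 < d) : star (phiPlus d) ⬝ᵥ phiPlus d = 1 := by
  rw [star_phiPlus_dotProduct]
  simp only [phiPlus, if_true, sum_const, card_univ, Fintype.card_fin, nsmul_eq_mul]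
  rw [mul_left_comm, ofReal_one_div_sqrt_natCast_mul_self]
  field_simp

theorem wfPair_coincidence {d : ℕ} (hd : 0 < d) (k m n : Fin d) :
    star (wfPair d k m n) ⬝ᵥ vecMulVec (phiPlus d) (star (phiPlus d)) *ᵥ wfPair d k m n
      = if m = n then (1 / (d : ℂ)) else 0 := by
  rw [star_dotProduct_vecMulVec_star_mulVec, star_phiPlus_dotProduct_wfPair hd]
  split_ifs
  · rw [normSq_ofReal, one_div_sqrt_natCast_mul_self]
    push_cast
    rfl
  · simp

theorem stmt_19_general (d : ℕ) (hd : d.Prime) (k k' : Fin d)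
    (Φ : Fin d × Fin d → ℂ)
    (hΦ : ∀ p : Fin d × Fin d,
      Φ p = if p.1 = p.2 then ((1 / Real.sqrt d : ℝ) : ℂ) else 0)
    (ρ : Matrix (Fin d × Fin d) (Fin d × Fin d) ℂ)
    (hρ : ρ = Matrix.vecMulVec Φ (star Φ)) :
    (∀ m n : Fin d,
      star (wfPair d k m n) ⬝ᵥ ρ *ᵥ wfPair d k m n
        = if m = n then (1 / (d : ℂ)) else 0) ∧
    (∀ m n : Fin d,
      star (wfPair d k' m n) ⬝ᵥ ρ *ᵥ wfPair d k' m n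
        = if m = n then (1 / (d : ℂ)) else 0) ∧
    ((1 / (d : ℝ)) * ∑ m : Fin d, (star (wfPair d k m m) ⬝ᵥ ρ *ᵥ wfPair d k m m).re
      + ∑ m : Fin d, (star (wfPair d k' m m) ⬝ᵥ ρ *ᵥ wfPair d k' m m).re
      - 1 / d
      - ∑ m : Fin d, ∑ n : Fin d, ∑ m' : Fin d, ∑ n' : Fin d,
          (if m ≠ m' ∧ m ≠ n ∧ n ≠ n' ∧ n' ≠ m'
          then gammaCoef d m n m' n' *
            Real.sqrt ((star (wfPair d k m' n') ⬝ᵥ ρ *ᵥ wfPair d k m' n').re *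
              (star (wfPair d k m n) ⬝ᵥ ρ *ᵥ wfPair d k m n).re)
          else 0)) = 1 ∧
    star Φ ⬝ᵥ ρ *ᵥ Φ = 1 := by
  obtain rfl : Φ = phiPlus d := funext hΦ
  subst hρ
  have hcoinc := wfPair_coincidence hd.pos
  refine ⟨hcoinc k, hcoinc k', ?_, ?_⟩
  · have hd0 : (d : ℝ) ≠ 0 := Nat.cast_ne_zero.mpr hd.ne_zero
    -- each correction term has the factor `⟨m n|ρ|m n⟩ = 0` for `m ≠ n` under its square root
    simp +contextual [hcoinc, hd0]
  · rw [star_dotProduct_vecMulVec_star_mulVec, star_phiPlus_dotProduct_self hd.pos]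
    simp

theorem stmt_19 (d : ℕ) (hd : d.Prime) (hodd : Odd d) (k k' : Fin d) (hkk : k ≠ k')
    (Φ : Fin d × Fin d → ℂ)
    (hΦ : ∀ p : Fin d × Fin d,
      Φ p = if p.1 = p.2 then ((1 / Real.sqrt d : ℝ) : ℂ) else 0)
    (ρ : Matrix (Fin d × Fin d) (Fin d × Fin d) ℂ)
    (hρ : ρ = Matrix.vecMulVec Φ (star Φ)) :
    (∀ m n : Fin d,
      star (wfPair d k m n) ⬝ᵥ ρ *ᵥ wfPair d k m n
        = if m = n then (1 / (d : ℂ)) else 0) ∧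
    (∀ m n : Fin d,
      star (wfPair d k' m n) ⬝ᵥ ρ *ᵥ wfPair d k' m n
        = if m = n then (1 / (d : ℂ)) else 0) ∧
    ((1 / (d : ℝ)) * ∑ m : Fin d, (star (wfPair d k m m) ⬝ᵥ ρ *ᵥ wfPair d k m m).re
      + ∑ m : Fin d, (star (wfPair d k' m m) ⬝ᵥ ρ *ᵥ wfPair d k' m m).re
      - 1 / d
      - ∑ m : Fin d, ∑ n : Fin d, ∑ m' : Fin d, ∑ n' : Fin d,
          (if m ≠ m' ∧ m ≠ n ∧ n ≠ n' ∧ n' ≠ m'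
          then gammaCoef d m n m' n' *
            Real.sqrt ((star (wfPair d k m' n') ⬝ᵥ ρ *ᵥ wfPair d k m' n').re *
              (star (wfPair d k m n) ⬝ᵥ ρ *ᵥ wfPair d k m n).re)
          else 0)) = 1 ∧
    star Φ ⬝ᵥ ρ *ᵥ Φ = 1 :=
  stmt_19_general d hd k k' Φ hΦ ρ hρ
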